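/- Every graph K ∈ 𝒦(p,q) has an even number of edges. Consequently, the path P₄ on 4 vertices, which has 3 edges, does not belong to 𝒦(p,q) for any p, q; hence the converse of the partial-transpose criterion fails: there is a vertex ordering of P₄ whose adjacency matrix satisfies A = A^{Γ₂} (all 2 × 2 blocks symmetric), yet P₄ ∉ 𝒦(2,2). -/

import Mathlib

open SimpleGraph

variable {α β : Type*}

/-- The tensor (categorical / direct) product of two simple graphs:
`(g,h)` and `(g',h')` are adjacent iff `g ~ g'` in `G` and `h ~ h'` in `H`. -/
def tensorProd (G : SimpleGraph α) (H : SimpleGraph β) : SimpleGraph (α × β) where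
  Adj x y := G.Adj x.1 y.1 ∧ H.Adj x.2 y.2
  symm := ⟨fun _ _ h => ⟨h.1.symm, h.2.symm⟩⟩
  loopless := ⟨fun x h => G.loopless.irrefl x.1 h.1⟩

infixl:70 " ⊗t " => tensorProd

@[simp] lemma tensorProd_adj (G : SimpleGraph α) (H : SimpleGraph β) (x y : α × β) :
    (G ⊗t H).Adj x y ↔ G.Adj x.1 y.1 ∧ H.Adj x.2 y.2 := Iff.rfl

/-- The 2-sum (sum modulo 2) of two graphs on a common vertex set: the edge set is
the symmetric difference of the two edge sets. -/
def twoSum (G H : SimpleGraph α) : SimpleGraph α where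
  Adj u v := (G.Adj u v ∧ ¬ H.Adj u v) ∨ (H.Adj u v ∧ ¬ G.Adj u v)
  symm := ⟨fun u v h => h.imp (fun h' => ⟨h'.1.symm, fun hh => h'.2 hh.symm⟩)
    (fun h' => ⟨h'.1.symm, fun hh => h'.2 hh.symm⟩)⟩
  loopless := ⟨fun u h => h.elim (fun h' => G.loopless.irrefl u h'.1)
    (fun h' => H.loopless.irrefl u h'.1)⟩

@[simp] lemma twoSum_adj (G H : SimpleGraph α) (u v : α) :
    (twoSum G H).Adj u v ↔ (G.Adj u v ∧ ¬ H.Adj u v) ∨ (H.Adj u v ∧ ¬ G.Adj u v) := Iff.rfl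

/-- The iterated 2-sum `⊕_{k=1}^l F k` (`⊥`, the empty graph, is the neutral element). -/
def twoSumMany {l : ℕ} (F : Fin l → SimpleGraph α) : SimpleGraph α :=
  (List.ofFn F).foldr twoSum ⊥

/-- `K ∈ 𝒦(p,q)`: `K` is a 2-sum `⊕_{k=1}^l (G_k ⊗ H_k)` of tensor products, where every
`G_k` is a graph on `p` fixed vertices with at least one edge and every `H_k` is a graph on
`q` fixed vertices with at least one edge. -/
def MemK (p q : ℕ) (K : SimpleGraph (Fin p × Fin q)) : Prop :=
  ∃ (l : ℕ) (G : Fin l → SimpleGraph (Fin p)) (H : Fin l → SimpleGraph (Fin q)),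
    0 < l ∧ (∀ k, ∃ a b, (G k).Adj a b) ∧ (∀ k, ∃ c d, (H k).Adj c d) ∧
    K = twoSumMany fun k => (G k) ⊗t (H k)

/-- A graph on `α × β` is cross-like if `(a,b) ~ (c,d)` implies `(a,d) ~ (c,b)`. -/
def CrossLike (K : SimpleGraph (α × β)) : Prop :=
  ∀ a c : α, ∀ b d : β, K.Adj (a, b) (c, d) → K.Adj (a, d) (c, b)

/-- The graph with the single edge `{a,b}` (for `a ≠ b`). -/
def singleEdge (a b : α) : SimpleGraph α := fromEdgeSet {s(a, b)}

/-- The tensor-elementary graph `E(i,i';j,j')`: the tensor product of the single-edge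
graph with edge `{g_i, g_{i'}}` and the single-edge graph with edge `{h_j, h_{j'}}`. -/
def tensorElem {p q : ℕ} (i i' : Fin p) (j j' : Fin q) : SimpleGraph (Fin p × Fin q) :=
  singleEdge i i' ⊗t singleEdge j j'

open scoped Classical in
/-- The adjacency matrix of a graph (entries in `ℕ`). -/
noncomputable def adjMat {V : Type*} (K : SimpleGraph V) : Matrix V V ℕ :=
  Matrix.of fun u v => if K.Adj u v then 1 else 0

/-- The partial transpose of a `pq × pq` matrix viewed as a `p × p` array of `q × q` blocks:
each block is transposed independently. -/
def ptrans {p q : ℕ} {R : Type*} (M : Matrix (Fin p × Fin q) (Fin p × Fin q) R) :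
    Matrix (Fin p × Fin q) (Fin p × Fin q) R :=
  Matrix.of fun x y => M (x.1, y.2) (y.1, x.2)

/-!
The map `{(a,b),(c,d)} ↦ {(a,d),(c,b)}` preserves the edge set of a tensor product `G ⊗ H`
and, since `a ≠ c` and `b ≠ d` on every such edge, has no fixed edge. Both properties survive
2-sums, so on every `K ∈ 𝒦(p,q)` this map is a fixed-point-free involution of the edges, and
`K` has an even number of edges. The ordering `(0,1) - (0,0) - (1,0) - (1,1)` of `P₄` makes
each edge stay inside one row or one column of the `2 × 2` grid, so the same map fixes its edge
set, which is exactly `A = A^{Γ₂}`; yet `P₄` has three edges.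
-/

open Finset

theorem Finset.even_card_of_involution {ι : Type*} {s : Finset ι} (g : ι → ι)
    (hg_ne : ∀ a ∈ s, g a ≠ a) (hg_mem : ∀ a ∈ s, g a ∈ s) (hg_inv : ∀ a ∈ s, g (g a) = a) :
    Even #s := by
  rw [← ZMod.natCast_eq_zero_iff_even, card_eq_sum_ones, Nat.cast_sum, Nat.cast_one]
  exact sum_involution (fun a _ => g a) (fun _ _ => rfl) (fun a ha _ => hg_ne a ha) hg_mem hg_inv

namespace SimpleGraph

theorem tensorProd_mono {G G' : SimpleGraph α} {H H' : SimpleGraph β} (hG : G ≤ G')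
    (hH : H ≤ H') : G ⊗t H ≤ G' ⊗t H' :=
  fun _ _ h => ⟨hG h.1, hH h.2⟩

theorem twoSum_le_sup (G H : SimpleGraph α) : twoSum G H ≤ G ⊔ H := by
  rintro u v (h | h)
  exacts [Or.inl h.1, Or.inr h.1]

theorem twoSumMany_succ {l : ℕ} (F : Fin (l + 1) → SimpleGraph α) :
    twoSumMany F = twoSum (F 0) (twoSumMany fun k => F k.succ) := by
  simp only [twoSumMany, List.ofFn_succ, List.foldr_cons]

theorem twoSumMany_le {l : ℕ} {F : Fin l → SimpleGraph α} {B : SimpleGraph α}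
    (hF : ∀ k, F k ≤ B) : twoSumMany F ≤ B := by
  induction l with
  | zero => exact bot_le
  | succ l ih =>
    rw [twoSumMany_succ]
    exact (twoSum_le_sup _ _).trans (sup_le (hF 0) (ih fun k => hF k.succ))

def crossFlip : Sym2 (α × β) → Sym2 (α × β) :=
  Sym2.lift ⟨fun x y => s((x.1, y.2), (y.1, x.2)), fun _ _ => Sym2.eq_swap⟩

@[simp]
theorem crossFlip_mk (x y : α × β) : crossFlip s(x, y) = s((x.1, y.2), (y.1, x.2)) := rfl

theorem crossFlip_involutive : Function.Involutive (crossFlip : Sym2 (α × β) → _) := by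
  intro e
  induction e using Sym2.ind
  rfl

theorem crossFlip_ne_self {x y : α × β} (h₁ : x.1 ≠ y.1) (h₂ : x.2 ≠ y.2) :
    crossFlip s(x, y) ≠ s(x, y) := by
  rw [crossFlip_mk, Ne, Sym2.eq_iff]
  rintro (⟨h, -⟩ | ⟨h, -⟩)
  exacts [h₂ (Prod.ext_iff.mp h).2.symm, h₁ (Prod.ext_iff.mp h).1]

theorem crossLike_tensorProd (G : SimpleGraph α) (H : SimpleGraph β) : CrossLike (G ⊗t H) :=
  fun _ _ _ _ h => ⟨h.1, h.2.symm⟩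

namespace CrossLike

variable {K : SimpleGraph (α × β)}

theorem adj_iff (hK : CrossLike K) (a c : α) (b d : β) :
    K.Adj (a, b) (c, d) ↔ K.Adj (a, d) (c, b) :=
  ⟨hK a c b d, hK a c d b⟩

theorem crossFlip_mem_edgeSet (hK : CrossLike K) {e : Sym2 (α × β)} (he : e ∈ K.edgeSet) :
    crossFlip e ∈ K.edgeSet := by
  induction e using Sym2.ind
  exact hK _ _ _ _ he

protected theorem twoSum {K' : SimpleGraph (α × β)} (hK : CrossLike K) (hK' : CrossLike K') :
    CrossLike (twoSum K K') := by
  intro a c b d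
  simp only [twoSum_adj, hK.adj_iff a c b d, hK'.adj_iff a c b d]
  exact id

theorem twoSumMany {l : ℕ} {F : Fin l → SimpleGraph (α × β)} (hF : ∀ k, CrossLike (F k)) :
    CrossLike (twoSumMany F) := by
  induction l with
  | zero => exact fun _ _ _ _ h => h
  | succ l ih =>
    rw [twoSumMany_succ]
    exact (hF 0).twoSum (ih fun k => hF k.succ)

theorem even_card_edgeFinset [Fintype K.edgeSet] (hK : CrossLike K) (hoff : K ≤ ⊤ ⊗t ⊤) :
    Even #K.edgeFinset := by
  refine even_card_of_involution crossFlip (fun e he => ?_)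
    (fun e he => mem_edgeFinset.mpr (hK.crossFlip_mem_edgeSet (mem_edgeFinset.mp he)))
    (fun e _ => crossFlip_involutive e)
  induction e using Sym2.ind with
  | _ x y =>
    obtain ⟨h₁, h₂⟩ := hoff (mem_edgeFinset.mp he)
    exact crossFlip_ne_self h₁ h₂

end CrossLike

end SimpleGraph

namespace MemK

variable {p q : ℕ} {K : SimpleGraph (Fin p × Fin q)}

theorem crossLike (hK : MemK p q K) : CrossLike K := by
  obtain ⟨l, G, H, -, -, -, rfl⟩ := hK
  exact CrossLike.twoSumMany fun k => crossLike_tensorProd (G k) (H k)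

theorem le_top_tensorProd_top (hK : MemK p q K) : K ≤ ⊤ ⊗t ⊤ := by
  obtain ⟨l, G, H, -, -, -, rfl⟩ := hK
  exact twoSumMany_le fun k => tensorProd_mono le_top le_top

theorem even_card_edgeFinset [Fintype K.edgeSet] (hK : MemK p q K) : Even #K.edgeFinset :=
  hK.crossLike.even_card_edgeFinset hK.le_top_tensorProd_top

end MemK

theorem ptrans_adjMat_of_crossLike {p q : ℕ} {K : SimpleGraph (Fin p × Fin q)}
    (hK : CrossLike K) : ptrans (adjMat K) = adjMat K := by
  ext ⟨a, b⟩ ⟨c, d⟩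
  classical
  simp only [ptrans, adjMat, Matrix.of_apply, ← hK.adj_iff a c b d]

theorem card_edgeFinset_pathGraph_four [Fintype (pathGraph 4).edgeSet] :
    #(pathGraph 4).edgeFinset = 3 := by
  have : (pathGraph 4).edgeFinset = {s(0, 1), s(1, 2), s(2, 3)} := by
    ext e
    induction e using Sym2.ind with
    | _ u v =>
      rw [mem_edgeFinset, mem_edgeSet, pathGraph_adj]
      revert u v
      decide
  rw [this]
  rfl

theorem MemK.not_nonempty_iso_pathGraph_four {p q : ℕ} {K : SimpleGraph (Fin p × Fin q)}
    (hK : MemK p q K) : ¬ Nonempty (K ≃g pathGraph 4) := by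
  classical
  rintro ⟨φ⟩
  have hEven := hK.even_card_edgeFinset
  rw [φ.card_edgeFinset_eq, card_edgeFinset_pathGraph_four] at hEven
  exact absurd hEven (by decide)

/-- The order `(0,1), (0,0), (1,0), (1,1)` of the grid `Fin 2 × Fin 2`. -/
def gridOrderPathFour : Fin 2 × Fin 2 ≃ Fin 4 :=
  finProdFinEquiv.trans (Equiv.swap 0 1)

theorem crossLike_comap_gridOrderPathFour : CrossLike ((pathGraph 4).comap gridOrderPathFour) := by
  simp only [CrossLike, comap_adj, pathGraph_adj]
  decide

open scoped Classical in
/-- Every `K ∈ 𝒦(p,q)` has an even number of edges; consequently the path `P₄` on `4`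
vertices, having `3` edges, belongs to no `𝒦(p,q)`. Hence the converse of the
partial-transpose criterion fails: there is a vertex ordering of `P₄` (a graph on
`Fin 2 × Fin 2` isomorphic to `P₄`) whose adjacency matrix equals its own partial transpose,
yet which is not in `𝒦(2,2)`. -/
theorem converse_of_partial_transpose_criterion_fails :
    (∀ (p q : ℕ) (K : SimpleGraph (Fin p × Fin q)), MemK p q K →
      Even K.edgeFinset.card) ∧
    (SimpleGraph.pathGraph 4).edgeFinset.card = 3 ∧
    (∀ (p q : ℕ) (K : SimpleGraph (Fin p × Fin q)), MemK p q K →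
      ¬ Nonempty (K ≃g SimpleGraph.pathGraph 4)) ∧
    ∃ P : SimpleGraph (Fin 2 × Fin 2), Nonempty (P ≃g SimpleGraph.pathGraph 4) ∧
      adjMat P = ptrans (adjMat P) ∧ ¬ MemK 2 2 P := by
  have hIso : Nonempty ((pathGraph 4).comap gridOrderPathFour ≃g pathGraph 4) :=
    ⟨Iso.comap gridOrderPathFour (pathGraph 4)⟩
  refine ⟨fun _ _ _ hK => hK.even_card_edgeFinset, card_edgeFinset_pathGraph_four,
    fun _ _ _ hK => hK.not_nonempty_iso_pathGraph_four, _, hIso,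
    (ptrans_adjMat_of_crossLike crossLike_comap_gridOrderPathFour).symm,
    fun hK => hK.not_nonempty_iso_pathGraph_four hIso⟩
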